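/- arXiv:2602.21274 — 3 statements merged into one kernel-verified Lean document; each statement's English description precedes it below -/
import Mathlib

section
/- For each (i,j) ∈ {2, …, n+1} × {1, …, n+1}, Cof_{i,j}[A_n] = (M_{i−1}^n/(β_{i−1} − r_{j−1}))·Cof_{1,j}[A_n]. -/
open Finset Matrix

/-- The (i,j) cofactor of a square matrix: (−1)^(i+j) times the determinant of the
submatrix obtained by deleting row `i` and column `j`. -/
noncomputable def cof {n : ℕ} (M : Matrix (Fin (n + 1)) (Fin (n + 1)) ℝ)
    (i j : Fin (n + 1)) : ℝ :=
  (-1 : ℝ) ^ ((i : ℕ) + (j : ℕ)) * (M.submatrix i.succAbove j.succAbove).det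

/-!
Fix a row `i` and put `cⱼ = Cof_{i,j}[A]`. By the expansion of determinants along a row, the sum
`∑ⱼ cⱼ / (z - rⱼ)` vanishes at `z = βₖ` for every `k ≥ 1`, `k ≠ i` (a repeated row, up to the
factor `βₖ`), and for `i ≥ 1` it equals `det A / βᵢ` at `z = βᵢ`. Its numerator
`∑ⱼ cⱼ ∏_{l ≠ j} (z - rₗ)` has `z^n`-coefficient `∑ⱼ cⱼ`, which is `det A` for `i = 0` and `0`
otherwise (the row of ones). Counting roots, the numerator is `det A ∏ₖ (z - βₖ)` for `i = 0` and
`κ ∏_{k ≠ i} (z - βₖ)` for `i ≥ 1`, with `κ` fixed by the value at `βᵢ`. Evaluating both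
numerators at `z = rⱼ` gives the two cofactors up to the same factor `∏_{l ≠ j} (rⱼ - rₗ)`, and
their ratio is `Mᵢ / (βᵢ - rⱼ)`.
-/

open Polynomial Lagrange

section PartialFractions

variable {K ι : Type*} [Field K]

theorem Polynomial.eq_C_coeff_mul_nodal {p : K[X]} {s : Finset ι} {v : ι → K}
    (hv : Set.InjOn v s) (hp : p.natDegree ≤ #s) (hroot : ∀ i ∈ s, p.eval (v i) = 0) :
    p = C (p.coeff #s) * nodal s v := by
  rw [← sub_eq_zero]
  refine Polynomial.eq_zero_of_degree_lt_of_eval_index_eq_zero _ hv ?_ fun i hi => ?_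
  · have hmonic : (nodal s v).Monic := nodal_monic
    have hdeg : (nodal s v).natDegree = #s := natDegree_nodal
    rw [degree_lt_iff_coeff_zero]
    intro m hm
    rcases hm.eq_or_lt with rfl | hlt
    · rw [coeff_sub, coeff_C_mul, ← hdeg, hmonic.coeff_natDegree, hdeg, mul_one, sub_self]
    · rw [coeff_sub, coeff_C_mul, coeff_eq_zero_of_natDegree_lt (hp.trans_lt hlt),
        coeff_eq_zero_of_natDegree_lt (p := nodal s v) (by omega), mul_zero, sub_zero]
  · simp [hroot i hi, eval_nodal_at_node hi]

variable [Fintype ι] [DecidableEq ι]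

noncomputable def partialFractionNumerator (y c : ι → K) : K[X] :=
  ∑ j, C (c j) * nodal (univ.erase j) y

variable {y : ι → K} (c : ι → K)

theorem eval_partialFractionNumerator_node (j : ι) :
    (partialFractionNumerator y c).eval (y j) = c j * ∏ k ∈ univ.erase j, (y j - y k) := by
  rw [partialFractionNumerator, eval_finsetSum, Finset.sum_eq_single j]
  · simp [eval_nodal]
  · intro k _ hkj
    rw [eval_mul, eval_nodal_at_node (v := y) (mem_erase.2 ⟨fun h => hkj h.symm, mem_univ j⟩),
      mul_zero]
  · simp

theorem eval_partialFractionNumerator {z : K} (hz : ∀ j, z ≠ y j) :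
    (partialFractionNumerator y c).eval z = (∏ j, (z - y j)) * ∑ j, c j / (z - y j) := by
  rw [partialFractionNumerator, eval_finsetSum, Finset.mul_sum]
  refine Finset.sum_congr rfl fun j _ => ?_
  rw [eval_mul, eval_C, eval_nodal, ← Finset.mul_prod_erase _ _ (mem_univ j)]
  field_simp [sub_ne_zero.2 (hz j)]

theorem natDegree_partialFractionNumerator_le :
    (partialFractionNumerator y c).natDegree ≤ Fintype.card ι - 1 :=
  natDegree_sum_le_of_forall_le _ _ fun j _ =>
    (natDegree_C_mul_le _ _).trans (by simp [natDegree_nodal, card_erase_of_mem])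

theorem coeff_partialFractionNumerator :
    (partialFractionNumerator y c).coeff (Fintype.card ι - 1) = ∑ j, c j := by
  rw [partialFractionNumerator, finsetSum_coeff]
  refine Finset.sum_congr rfl fun j _ => ?_
  have h := (nodal_monic (s := univ.erase j) (v := y)).coeff_natDegree
  rw [natDegree_nodal, card_erase_of_mem (mem_univ j), card_univ] at h
  rw [coeff_C_mul, h, mul_one]

end PartialFractions

section BorderedCauchy

variable {K : Type*} [Field K] {n : ℕ}

theorem Matrix.sum_mul_adjugate {ι : Type*} [Fintype ι] [DecidableEq ι] (A : Matrix ι ι K)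
    (k i : ι) : ∑ j, A k j * A.adjugate j i = if k = i then A.det else 0 := by
  simpa [Matrix.mul_apply, Matrix.one_apply] using congrFun (congrFun A.mul_adjugate k) i

variable {x : Fin n → K} {y : Fin (n + 1) → K} {A : Matrix (Fin (n + 1)) (Fin (n + 1)) K}

theorem sum_adjugate_of_row_zero (hA0 : ∀ j, A 0 j = 1) (i : Fin (n + 1)) :
    ∑ j, A.adjugate j i = if 0 = i then A.det else 0 := by
  simpa [hA0] using A.sum_mul_adjugate 0 i

theorem sum_adjugate_div_sub_of_row_succ (hA : ∀ a j, A a.succ j = x a / (x a - y j))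
    {a : Fin n} (hx0 : x a ≠ 0) (i : Fin (n + 1)) :
    ∑ j, A.adjugate j i / (x a - y j) = if a.succ = i then A.det / x a else 0 := by
  have h := A.sum_mul_adjugate a.succ i
  simp only [hA] at h
  calc ∑ j, A.adjugate j i / (x a - y j)
      = (x a)⁻¹ * ∑ j, x a / (x a - y j) * A.adjugate j i := by
        rw [Finset.mul_sum]
        refine Finset.sum_congr rfl fun j _ => ?_
        field_simp
    _ = _ := by rw [h]; split_ifs <;> simp [div_eq_inv_mul]

variable (hx : Function.Injective x) (hx0 : ∀ a, x a ≠ 0) (hxy : ∀ a j, x a ≠ y j)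
  (hA0 : ∀ j, A 0 j = 1) (hA : ∀ a j, A a.succ j = x a / (x a - y j))
include hx hx0 hxy hA0 hA

theorem adjugate_zero_mul_prod (j : Fin (n + 1)) :
    A.adjugate j 0 * ∏ k ∈ univ.erase j, (y j - y k) = A.det * ∏ a, (y j - x a) := by
  set P := partialFractionNumerator y fun j => A.adjugate j 0
  have hdeg : P.natDegree ≤ #(univ : Finset (Fin n)) := by
    simpa using natDegree_partialFractionNumerator_le (y := y) fun j => A.adjugate j 0
  have hcoeff : P.coeff #(univ : Finset (Fin n)) = A.det := by
    simpa [sum_adjugate_of_row_zero hA0] using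
      coeff_partialFractionNumerator (y := y) fun j => A.adjugate j 0
  have hroot : ∀ a ∈ univ, P.eval (x a) = 0 := fun a _ => by
    rw [eval_partialFractionNumerator _ (hxy a), sum_adjugate_div_sub_of_row_succ hA (hx0 a),
      if_neg (Fin.succ_ne_zero a), mul_zero]
  have h := congrArg (eval (y j)) (Polynomial.eq_C_coeff_mul_nodal hx.injOn hdeg hroot)
  rwa [eval_partialFractionNumerator_node, hcoeff, eval_mul, eval_C, eval_nodal] at h

theorem adjugate_succ_mul_prod (a : Fin n) (j : Fin (n + 1)) :
    (A.adjugate j a.succ * ∏ k ∈ univ.erase j, (y j - y k)) *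
        (x a * ∏ b ∈ univ.erase a, (x a - x b)) =
      A.det * (∏ k, (x a - y k)) * ∏ b ∈ univ.erase a, (y j - x b) := by
  set P := partialFractionNumerator y fun j => A.adjugate j a.succ
  have hdeg : P.natDegree ≤ #(univ.erase a) := by
    rw [card_erase_of_mem (mem_univ a), card_univ, Fintype.card_fin]
    refine natDegree_le_pred (by simpa using natDegree_partialFractionNumerator_le (y := y) _) ?_
    simpa [sum_adjugate_of_row_zero hA0, (Fin.succ_ne_zero a).symm] using
      coeff_partialFractionNumerator (y := y) fun j => A.adjugate j a.succ
  have hroot : ∀ b ∈ univ.erase a, P.eval (x b) = 0 := fun b hb => by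
    rw [eval_partialFractionNumerator _ (hxy b), sum_adjugate_div_sub_of_row_succ hA (hx0 b),
      if_neg (by simpa using ne_of_mem_erase hb), mul_zero]
  have hP := Polynomial.eq_C_coeff_mul_nodal hx.injOn hdeg hroot
  have hxa := congrArg (eval (x a)) hP
  have hyj := congrArg (eval (y j)) hP
  rw [eval_partialFractionNumerator _ (hxy a), sum_adjugate_div_sub_of_row_succ hA (hx0 a),
    if_pos rfl, eval_mul, eval_C, eval_nodal] at hxa
  rw [eval_partialFractionNumerator_node, eval_mul, eval_C, eval_nodal] at hyj
  rw [mul_div_assoc', div_eq_iff (hx0 a)] at hxa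
  rw [hyj]
  linear_combination -(∏ b ∈ univ.erase a, (y j - x b)) * hxa

theorem adjugate_succ_eq (hy : Function.Injective y) (a : Fin n) (j : Fin (n + 1)) :
    A.adjugate j a.succ =
      -(∏ k, (x a - y k)) / (x a * ∏ b ∈ univ.erase a, (x a - x b)) / (x a - y j) *
        A.adjugate j 0 := by
  have hD : ∏ k ∈ univ.erase j, (y j - y k) ≠ 0 :=
    prod_ne_zero_iff.2 fun k hk => sub_ne_zero.2 (hy.ne (ne_of_mem_erase hk).symm)
  have hxx : x a * ∏ b ∈ univ.erase a, (x a - x b) ≠ 0 :=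
    mul_ne_zero (hx0 a) <|
      prod_ne_zero_iff.2 fun b hb => sub_ne_zero.2 (hx.ne (ne_of_mem_erase hb).symm)
  rw [div_div, div_mul_eq_mul_div, eq_div_iff (mul_ne_zero hxx (sub_ne_zero.2 (hxy a j)))]
  refine mul_right_cancel₀ hD ?_
  have h0 := adjugate_zero_mul_prod hx hx0 hxy hA0 hA j
  rw [← mul_prod_erase univ (fun b => y j - x b) (mem_univ a)] at h0
  linear_combination (x a - y j) * adjugate_succ_mul_prod hx hx0 hxy hA0 hA a j +
    (∏ k, (x a - y k)) * h0

end BorderedCauchy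

section SignedProducts

variable {R : Type*} [CommRing R] (f : ℕ → R)

theorem prod_range_mul_prod_Ico_neg {m N : ℕ} (h : m ≤ N) :
    (∏ k ∈ range m, f k) * ∏ k ∈ Ico m N, -f k =
      (-1) ^ (N - m) * ∏ k ∈ range N, f k := by
  rw [prod_neg, Nat.card_Ico, mul_left_comm, prod_range_mul_prod_Ico f h]

theorem prod_range_mul_prod_Ico_succ_neg {m N : ℕ} (h : m < N) :
    (∏ k ∈ range m, f k) * ∏ k ∈ Ico (m + 1) N, -f k =
      (-1) ^ (N - m - 1) * ∏ k ∈ (range N).erase m, f k := by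
  have hsplit : (range N).erase m = range m ∪ Ico (m + 1) N := by
    ext k; simp only [mem_erase, mem_range, mem_union, mem_Ico]; omega
  have hdisj : Disjoint (range m) (Ico (m + 1) N) := by
    rw [disjoint_left]; intro k; simp only [mem_range, mem_Ico]; omega
  rw [hsplit, prod_union hdisj, prod_neg, Nat.card_Ico, Nat.sub_sub, mul_left_comm]

theorem Fin.prod_univ_erase_eq_prod_range_erase {n : ℕ} (a : Fin n) :
    ∏ b ∈ univ.erase a, f b = ∏ k ∈ (range n).erase a, f k := by
  have h : (univ.erase a).map Fin.valEmbedding = (range n).erase a := by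
    ext k; simp [Fin.map_valEmbedding_univ]
  rw [← h, prod_map]
  rfl

end SignedProducts

theorem neg_prod_div_eq_of_lt {K : Type*} [Field K] (β r : ℕ → K) {a n : ℕ} (h : a < n) :
    ((∏ k ∈ range (a + 1), (β (a + 1) - r k)) * ∏ k ∈ Icc (a + 1) n, (r k - β (a + 1))) /
        (β (a + 1) * (∏ k ∈ Ico 1 (a + 1), (β (a + 1) - β k)) *
          ∏ k ∈ Icc (a + 1 + 1) n, (β k - β (a + 1))) =
      -(∏ k ∈ range (n + 1), (β (a + 1) - r k)) /
        (β (a + 1) * ∏ k ∈ (range n).erase a, (β (a + 1) - β (k + 1))) := by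
  have hnum : (∏ k ∈ range (a + 1), (β (a + 1) - r k)) *
      ∏ k ∈ Icc (a + 1) n, (r k - β (a + 1)) =
      (-1) ^ (n - a) * ∏ k ∈ range (n + 1), (β (a + 1) - r k) := by
    rw [← Nat.add_sub_add_right n 1 a, ← prod_range_mul_prod_Ico_neg _ (by omega),
      Ico_add_one_right_eq_Icc]
    simp only [neg_sub]
  have hden : (∏ k ∈ Ico 1 (a + 1), (β (a + 1) - β k)) *
      ∏ k ∈ Icc (a + 1 + 1) n, (β k - β (a + 1)) =
      (-1) ^ (n - a - 1) * ∏ k ∈ (range n).erase a, (β (a + 1) - β (k + 1)) := by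
    rw [← prod_range_mul_prod_Ico_succ_neg _ h, range_eq_Ico,
      prod_Ico_add' (fun k => β (a + 1) - β k), ← Ico_add_one_right_eq_Icc,
      ← prod_Ico_add' (fun k => β k - β (a + 1))]
    simp only [neg_sub, zero_add]
  obtain ⟨e, he⟩ : ∃ e, n - a - 1 = e := ⟨_, rfl⟩
  rw [hnum, mul_assoc, hden, he, show n - a = e + 1 by omega, pow_succ]
  calc _ = ((-1) ^ e * -∏ k ∈ range (n + 1), (β (a + 1) - r k)) /
        ((-1) ^ e * (β (a + 1) * ∏ k ∈ (range n).erase a, (β (a + 1) - β (k + 1)))) := by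
        ring
    _ = _ := mul_div_mul_left _ _ (pow_ne_zero _ (neg_ne_zero.2 one_ne_zero))

section Interlacing

variable {α : Type*} [Preorder α] {n : ℕ} {β r : ℕ → α}
  (hinter : ∀ k, 1 ≤ k → k ≤ n → r (k - 1) < β k ∧ β k < r k)
include hinter

theorem lt_of_interlacing {k l : ℕ} (hkl : k < l) (hl : l ≤ n) : r k < r l := by
  induction l with
  | zero => omega
  | succ l ih =>
    have hstep : r l < r (l + 1) := by
      simpa using (hinter (l + 1) (by omega) hl).1.trans (hinter (l + 1) (by omega) hl).2
    rcases Nat.lt_succ_iff_lt_or_eq.1 hkl with hlt | rfl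
    · exact (ih hlt (by omega)).trans hstep
    · exact hstep

theorem le_of_interlacing {k l : ℕ} (hkl : k ≤ l) (hl : l ≤ n) : r k ≤ r l :=
  hkl.eq_or_lt.elim (fun h => h ▸ le_rfl) fun h => (lt_of_interlacing hinter h hl).le

theorem lt_of_interlacing_of_lt {k a : ℕ} (hka : k < a) (ha : a ≤ n) : r k < β a :=
  (le_of_interlacing hinter (k := k) (l := a - 1) (by omega) (by omega)).trans_lt
    (hinter a (by omega) ha).1

theorem lt_of_interlacing_of_le {a k : ℕ} (ha : 1 ≤ a) (hak : a ≤ k) (hk : k ≤ n) :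
    β a < r k :=
  (hinter a ha (hak.trans hk)).2.trans_le (le_of_interlacing hinter hak hk)

theorem strictMono_fin_of_interlacing : StrictMono fun j : Fin (n + 1) => r j :=
  fun _ k hjk => lt_of_interlacing hinter hjk (Nat.lt_succ_iff.1 k.isLt)

theorem strictMono_fin_succ_of_interlacing : StrictMono fun a : Fin n => β (a + 1) :=
  fun a b hab => (lt_of_interlacing_of_le hinter (by omega) le_rfl (by omega)).trans
    (lt_of_interlacing_of_lt hinter (Nat.succ_lt_succ hab) (by omega))

theorem ne_of_interlacing (a : Fin n) (j : Fin (n + 1)) : β (a + 1) ≠ r j := by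
  rcases lt_or_ge (j : ℕ) (a + 1) with h | h
  · exact (lt_of_interlacing_of_lt hinter h (by omega)).ne'
  · exact (lt_of_interlacing_of_le hinter (by omega) h (by omega)).ne

end Interlacing

theorem cof_eq_adjugate {n : ℕ} (M : Matrix (Fin (n + 1)) (Fin (n + 1)) ℝ) (i j : Fin (n + 1)) :
    cof M i j = M.adjugate j i :=
  (M.adjugate_fin_succ_eq_det_submatrix j i).symm

theorem stmt3_general (n : ℕ) (β r : ℕ → ℝ)
    (hr0 : 0 < r 0)
    (hinter : ∀ k, 1 ≤ k → k ≤ n → r (k - 1) < β k ∧ β k < r k)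
    (A : Matrix (Fin (n + 1)) (Fin (n + 1)) ℝ)
    (hA : ∀ i j : Fin (n + 1), A i j = if (i : ℕ) = 0 then 1 else β i / (β i - r j))
    (M : ℕ → ℝ)
    (hM : ∀ i, 1 ≤ i → i ≤ n →
      M i = ((∏ k ∈ Finset.range i, (β i - r k)) * ∏ k ∈ Finset.Icc i n, (r k - β i)) /
        (β i * (∏ k ∈ Finset.Ico 1 i, (β i - β k)) * ∏ k ∈ Finset.Icc (i + 1) n, (β k - β i))) :
    ∀ i j : Fin (n + 1), 1 ≤ (i : ℕ) →
      cof A i j = (M i / (β i - r j)) * cof A 0 j := by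
  intro i j hi
  obtain ⟨a, rfl⟩ := Fin.exists_succ_eq.2 (Fin.pos_iff_ne_zero.1 hi)
  have hx0 : ∀ a : Fin n, β (a + 1) ≠ 0 := fun a =>
    (hr0.trans (lt_of_interlacing_of_lt hinter (Nat.succ_pos a) (by omega))).ne'
  rw [cof_eq_adjugate, cof_eq_adjugate, Fin.val_succ, hM _ (by omega) a.isLt,
    neg_prod_div_eq_of_lt β r a.isLt, ← Fin.prod_univ_erase_eq_prod_range_erase,
    ← Fin.prod_univ_eq_prod_range]
  exact adjugate_succ_eq (strictMono_fin_succ_of_interlacing hinter).injective hx0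
    (ne_of_interlacing hinter) (by simp [hA]) (fun a j => by simp [hA])
    (strictMono_fin_of_interlacing hinter).injective a j

theorem stmt3 (n : ℕ) (hn : 1 ≤ n) (β r : ℕ → ℝ)
    (hr0 : 0 < r 0)
    (hinter : ∀ k, 1 ≤ k → k ≤ n → r (k - 1) < β k ∧ β k < r k)
    (A : Matrix (Fin (n + 1)) (Fin (n + 1)) ℝ)
    (hA : ∀ i j : Fin (n + 1), A i j = if (i : ℕ) = 0 then 1 else β i / (β i - r j))
    (M : ℕ → ℝ)
    (hM : ∀ i, 1 ≤ i → i ≤ n →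
      M i = ((∏ k ∈ Finset.range i, (β i - r k)) * ∏ k ∈ Finset.Icc i n, (r k - β i)) /
        (β i * (∏ k ∈ Finset.Ico 1 i, (β i - β k)) * ∏ k ∈ Finset.Icc (i + 1) n, (β k - β i))) :
    ∀ i j : Fin (n + 1), 1 ≤ (i : ℕ) →
      cof A i j = (M i / (β i - r j)) * cof A 0 j :=
  stmt3_general n β r hr0 hinter A hA M hM
end

section
/- The identity (1/R^n)·(1 + ∑_{i=2}^{n+1} M_{i−1}^n/β_{i−1}) = ∑_{i=1}^{n+1} 1/r_{i−1} − ∑_{i=2}^{n+1} 1/β_{i−1} holds. -/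
/-!
Put `P(x) = ∏_{k=0}^{n} (r_k - x)` and `Q(x) = ∏_{k=1}^{n} (β_k - x)`, so that `R = P(0) / Q(0)`
and, up to the sign `(-1)^n`, `M_i = P(β_i) / (β_i ∏_{j ≠ i} (β_i - β_j))`. The polynomial
`q = (P - R Q) / X` has degree `n` and leading coefficient `(-1)^(n+1)`. Lagrange interpolation at
the `n + 1` nodes `0, β_1, …, β_n` writes this coefficient as `∑_v q(v) / ∏_{v' ≠ v} (v - v')`.
The node `β_i` contributes `(-1)^n M_i / β_i`, and the node `0` contributes
`(-1)^n R (∑ 1/β_i - ∑ 1/r_k)` because `q(0) = P'(0) - R Q'(0)`. Hence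
`-1 = R (∑ 1/β_i - ∑ 1/r_k) + ∑ M_i / β_i`.
-/

open Finset Polynomial

section Interlacing
variable {α : Type*} [Preorder α] {n : ℕ} {β r : ℕ → α}

lemma strictMonoOn_Iic_of_interlace (h : ∀ k, 1 ≤ k → k ≤ n → r (k - 1) < β k ∧ β k < r k) :
    StrictMonoOn r (Set.Iic n) :=
  strictMonoOn_Iic_of_lt_succ fun m hm => by
    obtain ⟨h₁, h₂⟩ := h (m + 1) (Nat.le_add_left 1 m) hm
    exact h₁.trans h₂

lemma strictMonoOn_Icc_of_interlace (h : ∀ k, 1 ≤ k → k ≤ n → r (k - 1) < β k ∧ β k < r k) :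
    StrictMonoOn β (Set.Icc 1 n) :=
  strictMonoOn_of_lt_add_one Set.ordConnected_Icc fun a _ ha ha' =>
    (h a ha.1 ha.2).2.trans (h (a + 1) ha'.1 ha'.2).1

end Interlacing

lemma Finset.prod_sub_comm {R ι : Type*} [CommRing R] (s : Finset ι) (f g : ι → R) :
    ∏ k ∈ s, (f k - g k) = (-1) ^ #s * ∏ k ∈ s, (g k - f k) := by
  rw [← prod_neg]
  exact prod_congr rfl fun _ _ => (neg_sub _ _).symm

section ProdCSubX
variable {R ι : Type*} [CommRing R] (s : Finset ι) (a : ι → R)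

lemma prod_C_sub_X_eq_C_mul_nodal :
    ∏ k ∈ s, (C (a k) - X) = C ((-1) ^ #s) * Lagrange.nodal s a := by
  rw [prod_sub_comm, Lagrange.nodal_eq, C_pow, C_neg, C_1]

variable [Nontrivial R]

lemma natDegree_prod_C_sub_X : (∏ k ∈ s, (C (a k) - X)).natDegree = #s := by
  rw [prod_C_sub_X_eq_C_mul_nodal, natDegree_C_mul_of_isUnit (isUnit_neg_one.pow _),
    Lagrange.natDegree_nodal]

lemma coeff_card_prod_C_sub_X : (∏ k ∈ s, (C (a k) - X)).coeff #s = (-1) ^ #s := by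
  rw [prod_C_sub_X_eq_C_mul_nodal, coeff_C_mul, ← Lagrange.natDegree_nodal (v := a),
    Lagrange.nodal_monic.coeff_natDegree, mul_one]

end ProdCSubX

lemma coeff_one_prod_C_sub_X {K ι : Type*} [Field K] [DecidableEq ι] (s : Finset ι) (a : ι → K)
    (ha : ∀ k ∈ s, a k ≠ 0) :
    (∏ k ∈ s, (C (a k) - X)).coeff 1 = -(∏ k ∈ s, a k) * ∑ k ∈ s, (a k)⁻¹ := by
  induction s using Finset.induction_on with
  | empty => simp [coeff_one]
  | insert j s hj ih =>
    have hs : ∀ k ∈ s, a k ≠ 0 := fun k hk => ha k (mem_insert_of_mem hk)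
    have haj : a j ≠ 0 := ha j (mem_insert_self j s)
    rw [prod_insert hj, sub_mul, coeff_sub, coeff_C_mul, coeff_X_mul, ih hs,
      coeff_zero_eq_eval_zero, eval_prod, prod_insert hj, sum_insert hj]
    simp only [eval_sub, eval_C, eval_X, sub_zero]
    field_simp
    ring

lemma Polynomial.degree_divX_lt_of_natDegree_le {R : Type*} [Semiring R] {p : R[X]} {m : ℕ}
    (h : p.natDegree ≤ m + 1) : (divX p).degree < m + 1 :=
  degree_le_natDegree.trans_lt <| by
    exact_mod_cast (natDegree_divX_eq_natDegree_tsub_one.trans_le (by omega)).trans_lt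
      m.lt_succ_self

lemma Polynomial.eval_divX_mul_of_coeff_zero {R : Type*} [CommSemiring R] {p : R[X]}
    (hp : p.coeff 0 = 0) (x : R) : (divX p).eval x * x = p.eval x := by
  conv_rhs => rw [← divX_mul_X_add p, hp]
  simp

section Lagrange
variable {K ι : Type*} [Field K] [DecidableEq ι]

lemma Finset.insertNone_erase_none (t : Finset ι) :
    (insertNone t).erase none = t.map Function.Embedding.some := by
  ext (_ | i) <;> simp

lemma Finset.insertNone_erase_some (t : Finset ι) (i : ι) :
    (insertNone t).erase (some i) = insertNone (t.erase i) := by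
  ext (_ | j) <;> simp

theorem Polynomial.coeff_card_eq_div_prod_add_sum {t : Finset ι} {b : ι → K}
    (hb : Set.InjOn b t) (hb0 : ∀ i ∈ t, b i ≠ 0) {q : K[X]} (hq : q.degree < #t + 1) :
    q.coeff #t = q.eval 0 / ∏ j ∈ t, -b j +
      ∑ i ∈ t, q.eval (b i) / (b i * ∏ j ∈ t.erase i, (b i - b j)) := by
  -- the nodes are indexed by `Option ι`, with `none` standing for the extra node `0`
  let v : Option ι → K := fun o => o.elim 0 b
  have hv : Set.InjOn v (insertNone t) := by
    rintro (_ | i) hi (_ | j) hj hij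
    · rfl
    · exact absurd hij.symm (hb0 j (by simpa using hj))
    · exact absurd hij (hb0 i (by simpa using hi))
    · exact congrArg some (hb (by simpa using hi) (by simpa using hj) hij)
  have h := Lagrange.coeff_eq_sum hv (P := q) (by rw [card_insertNone]; exact_mod_cast hq)
  simpa [v, card_insertNone, insertNone_erase_none, insertNone_erase_some] using h

/-- Lagrange interpolation of the polynomial `(P - (P(0) / Q(0)) Q) / X` at `0` and the `b i`. -/
theorem Polynomial.coeff_card_add_one_eq {t : Finset ι} {b : ι → K} (hb : Set.InjOn b t)
    (hb0 : ∀ i ∈ t, b i ≠ 0) {P Q : K[X]} (hP : P.natDegree ≤ #t + 1) (hQ : Q.natDegree ≤ #t)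
    (hQ0 : Q.eval 0 ≠ 0) (hQb : ∀ i ∈ t, Q.eval (b i) = 0) :
    P.coeff (#t + 1) = (P.coeff 1 - P.eval 0 / Q.eval 0 * Q.coeff 1) / ∏ j ∈ t, -b j +
      ∑ i ∈ t, P.eval (b i) / (b i ^ 2 * ∏ j ∈ t.erase i, (b i - b j)) := by
  set p := P - C (P.eval 0 / Q.eval 0) * Q
  have hp0 : p.coeff 0 = 0 := by
    rw [coeff_zero_eq_eval_zero, eval_sub, eval_mul, eval_C, div_mul_cancel₀ _ hQ0, sub_self]
  have hp : p.natDegree ≤ #t + 1 :=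
    (natDegree_sub_le _ _).trans (max_le hP ((natDegree_C_mul_le _ _).trans (by omega)))
  have h := coeff_card_eq_div_prod_add_sum hb hb0 (degree_divX_lt_of_natDegree_le hp)
  rw [coeff_divX, ← coeff_zero_eq_eval_zero, coeff_divX] at h
  simp only [p, coeff_sub, coeff_C_mul, zero_add,
    coeff_eq_zero_of_natDegree_lt (hQ.trans_lt (Nat.lt_succ_self #t)), mul_zero, sub_zero] at h
  rw [h]
  congr 1
  refine sum_congr rfl fun i hi => ?_
  have hpb := eval_divX_mul_of_coeff_zero hp0 (b i)
  rw [eval_sub, eval_mul, hQb i hi, mul_zero, sub_zero] at hpb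
  rw [eq_div_of_mul_eq (hb0 i hi) hpb, div_div, ← mul_assoc, sq]

end Lagrange

lemma div_eq_neg_one_pow_mul_prod_div {K : Type*} [Field K] {n i : ℕ} (hi : i ∈ Icc 1 n)
    (β r : ℕ → K) :
    ((∏ k ∈ range i, (β i - r k)) * ∏ k ∈ Icc i n, (r k - β i)) /
        (β i * (∏ k ∈ Ico 1 i, (β i - β k)) * ∏ k ∈ Icc (i + 1) n, (β k - β i)) =
      (-1) ^ n * (∏ k ∈ range (n + 1), (r k - β i)) /
        (β i * ∏ k ∈ (Icc 1 n).erase i, (β i - β k)) := by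
  obtain ⟨hi1, hin⟩ := mem_Icc.mp hi
  have hnum : ∏ k ∈ range (n + 1), (r k - β i) =
      (∏ k ∈ range i, (r k - β i)) * ∏ k ∈ Icc i n, (r k - β i) := by
    rw [← Ico_add_one_right_eq_Icc, prod_range_mul_prod_Ico _ (by omega)]
  have hden : ∏ k ∈ (Icc 1 n).erase i, (β i - β k) =
      (∏ k ∈ Ico 1 i, (β i - β k)) * ∏ k ∈ Icc (i + 1) n, (β i - β k) := by
    rw [← prod_union]
    · congr 1; ext k; simp only [mem_erase, mem_Icc, mem_Ico, mem_union]; omega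
    · exact disjoint_left.mpr fun k hk hk' => by simp only [mem_Ico, mem_Icc] at hk hk'; omega
  have hsign : ((-1 : K) ^ i * (-1) ^ (n - i)) = (-1) ^ n := by
    rw [← pow_add, Nat.add_sub_cancel' hin]
  rw [hnum, hden, prod_sub_comm (range i), prod_sub_comm (Icc (i + 1) n) (fun k => β k),
    card_range, Nat.card_Icc, Nat.add_sub_add_right, ← hsign]
  field_simp
  rw [← pow_mul, pow_mul', neg_one_sq, one_pow, mul_one]

theorem one_div_mul_one_add_sum_div_eq {K : Type*} [Field K] (n : ℕ) (β r : ℕ → K)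
    (hr : ∀ k ∈ range (n + 1), r k ≠ 0) (hβ : ∀ k ∈ Icc 1 n, β k ≠ 0)
    (hβinj : Set.InjOn β (Icc 1 n)) (M : ℕ → K)
    (hM : ∀ i ∈ Icc 1 n, M i = (-1) ^ n * (∏ k ∈ range (n + 1), (r k - β i)) /
        (β i * ∏ k ∈ (Icc 1 n).erase i, (β i - β k))) :
    (1 / ((∏ k ∈ range (n + 1), r k) / ∏ k ∈ Icc 1 n, β k)) * (1 + ∑ i ∈ Icc 1 n, M i / β i) =
      (∑ i ∈ range (n + 1), 1 / r i) - ∑ i ∈ Icc 1 n, 1 / β i := by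
  have hPr : ∏ k ∈ range (n + 1), r k ≠ 0 := prod_ne_zero_iff.mpr hr
  have hPβ : ∏ k ∈ Icc 1 n, β k ≠ 0 := prod_ne_zero_iff.mpr hβ
  have hcard : #(Icc 1 n) = n := by simp
  have key := coeff_card_add_one_eq hβinj hβ (P := ∏ k ∈ range (n + 1), (C (r k) - X))
    (Q := ∏ k ∈ Icc 1 n, (C (β k) - X)) (by rw [natDegree_prod_C_sub_X, card_range, hcard])
    (natDegree_prod_C_sub_X _ _).le (by simpa [eval_prod] using hPβ)
    fun i hi => by simpa [eval_prod] using prod_eq_zero hi (sub_self (β i))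
  have hε : (-1 : K) ^ n * (-1) ^ n = 1 := by rw [← mul_pow]; norm_num
  have hnode : ∀ i ∈ Icc 1 n, (∏ k ∈ range (n + 1), (r k - β i)) /
      (β i ^ 2 * ∏ j ∈ (Icc 1 n).erase i, (β i - β j)) = (-1) ^ n * (M i / β i) := fun i hi => by
    rw [hM i hi, mul_div_assoc, mul_div_assoc, ← mul_assoc, hε, one_mul]
    ring
  have hlead : (∏ k ∈ range (n + 1), (C (r k) - X)).coeff (n + 1) = (-1) ^ (n + 1) := by
    simpa using coeff_card_prod_C_sub_X (range (n + 1)) r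
  rw [hcard, hlead, coeff_one_prod_C_sub_X _ _ hr, coeff_one_prod_C_sub_X _ _ hβ, prod_neg, hcard]
    at key
  simp only [eval_prod, eval_sub, eval_C, eval_X, sub_zero] at key
  rw [sum_congr rfl hnode, ← mul_sum] at key
  set R := (∏ k ∈ range (n + 1), r k) / ∏ k ∈ Icc 1 n, β k
  have hRB : R * ∏ k ∈ Icc 1 n, β k = ∏ k ∈ range (n + 1), r k := div_mul_cancel₀ _ hPβ
  suffices h : 1 + ∑ i ∈ Icc 1 n, M i / β i =
      R * (∑ i ∈ range (n + 1), 1 / r i - ∑ i ∈ Icc 1 n, 1 / β i) by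
    rw [h, one_div, inv_mul_cancel_left₀ (div_ne_zero hPr hPβ)]
  rw [pow_succ] at key
  field_simp at key
  apply mul_right_cancel₀ hPβ
  linear_combination (-1) * key - (1 + ∑ i ∈ Icc 1 n, M i / β i) * (∏ k ∈ Icc 1 n, β k) * hε -
    (∑ i ∈ range (n + 1), 1 / r i) * hRB

theorem stmt5_general (n : ℕ) (β r : ℕ → ℝ)
    (hr0 : 0 < r 0)
    (hinter : ∀ k, 1 ≤ k → k ≤ n → r (k - 1) < β k ∧ β k < r k)
    (R : ℝ)
    (hR : R = (∏ k ∈ Finset.range (n + 1), r k) / ∏ k ∈ Finset.Icc 1 n, β k)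
    (M : ℕ → ℝ)
    (hM : ∀ i, 1 ≤ i → i ≤ n →
      M i = ((∏ k ∈ Finset.range i, (β i - r k)) * ∏ k ∈ Finset.Icc i n, (r k - β i)) /
        (β i * (∏ k ∈ Finset.Ico 1 i, (β i - β k)) * ∏ k ∈ Finset.Icc (i + 1) n, (β k - β i))) :
    (1 / R) * (1 + ∑ i ∈ Finset.Icc 1 n, M i / β i) =
      (∑ i ∈ Finset.range (n + 1), 1 / r i) - ∑ i ∈ Finset.Icc 1 n, 1 / β i := by
  have hr_mono := strictMonoOn_Iic_of_interlace hinter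
  have hβ_mono := strictMonoOn_Icc_of_interlace hinter
  have hr_pos : ∀ k ∈ range (n + 1), 0 < r k := fun k hk =>
    hr0.trans_le <| hr_mono.monotoneOn (by simp) (by simpa [Nat.lt_succ_iff] using hk) k.zero_le
  have hβ_pos : ∀ k ∈ Icc 1 n, 0 < β k := fun k hk =>
    (hr_pos (k - 1) (by simp at hk ⊢; omega)).trans (hinter k (mem_Icc.mp hk).1 (mem_Icc.mp hk).2).1
  subst hR
  refine one_div_mul_one_add_sum_div_eq n β r (fun k hk => (hr_pos k hk).ne')
    (fun k hk => (hβ_pos k hk).ne') (by simpa using hβ_mono.injOn) M fun i hi => ?_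
  rw [hM i (mem_Icc.mp hi).1 (mem_Icc.mp hi).2, div_eq_neg_one_pow_mul_prod_div hi]

theorem stmt5 (n : ℕ) (hn : 1 ≤ n) (β r : ℕ → ℝ)
    (hr0 : 0 < r 0)
    (hinter : ∀ k, 1 ≤ k → k ≤ n → r (k - 1) < β k ∧ β k < r k)
    (R : ℝ)
    (hR : R = (∏ k ∈ Finset.range (n + 1), r k) / ∏ k ∈ Finset.Icc 1 n, β k)
    (M : ℕ → ℝ)
    (hM : ∀ i, 1 ≤ i → i ≤ n →
      M i = ((∏ k ∈ Finset.range i, (β i - r k)) * ∏ k ∈ Finset.Icc i n, (r k - β i)) /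
        (β i * (∏ k ∈ Finset.Ico 1 i, (β i - β k)) * ∏ k ∈ Finset.Icc (i + 1) n, (β k - β i))) :
    (1 / R) * (1 + ∑ i ∈ Finset.Icc 1 n, M i / β i) =
      (∑ i ∈ Finset.range (n + 1), 1 / r i) - ∑ i ∈ Finset.Icc 1 n, 1 / β i :=
  stmt5_general n β r hr0 hinter R hR M hM
end

section
/- For every k ∈ {1, …, m_n}, the quantity Ξ_k := ∑_{j=1}^{m_p+1} K_{j−1}·β_k^n/(β_k^n + r_{j−1}) − (b* − c) + 1/β_k^n satisfies Ξ_k = ∑_{j=1}^{m_p+1} K_{j−1}·r_{j−1}²/(β_k^n·(β_k^n + r_{j−1})); in particular Ξ_k > 0. -/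
open Finset Matrix MeasureTheory

/-!
By Cramer's rule `K_j = R w_j / r_j²` with `w = A⁻¹ e₀`, and `w` has the closed form
`w_j = N_β(r_j) / ∏_{l ≠ j} (r_j - r_l)`, where `N_β = ∏ᵢ (X - βᵢ)`: the rows of `A w = e₀` are
the Lagrange identities `∑_j g(r_j) / ∏_{l ≠ j} (r_j - r_l) = coeff_{m_p} g` for `g = N_β` and
for `g = N_β / (X - βᵢ)`. The barycentric formula `∑_j w_j / (x - r_j) = N_β(x) / N_r(x)` and its
derivative at `x = 0` give `∑_j K_j r_j = 1` and `∑_j K_j = b* - c`, so the identity for `Ξ_k` is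
`β / (β + r) = r² / (β (β + r)) + 1 - r / β` summed against `K`. Interlacing makes every `w_j`,
hence every `K_j`, positive: the sign changes of `N_β(r_j)` and of `∏_{l ≠ j} (r_j - r_l)` cancel
in pairs.
-/

theorem eq_cof_div_det_of_mulVec_eq_single {n : ℕ} {A : Matrix (Fin (n + 1)) (Fin (n + 1)) ℝ}
    (hdet : A.det ≠ 0) {w : Fin (n + 1) → ℝ} (hw : A *ᵥ w = Pi.single 0 1) (j : Fin (n + 1)) :
    w j = cof A 0 j / A.det := by
  have hw' : w = A⁻¹ *ᵥ Pi.single 0 1 := by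
    rw [← hw, mulVec_mulVec, nonsing_inv_mul A hdet.isUnit, one_mulVec]
  rw [hw', mulVec_single_one, Matrix.inv_def, Ring.inverse_eq_inv, col_apply, Matrix.smul_apply,
    adjugate_fin_succ_eq_det_submatrix, cof, smul_eq_mul, div_eq_inv_mul]

theorem pos_of_pos_of_lt_succ {m : ℕ} {β : ℕ → ℝ} (h1 : 0 < β 1)
    (hmono : ∀ k, 1 ≤ k → k < m → β k < β (k + 1)) {k : ℕ} (hk1 : 1 ≤ k) (hkm : k ≤ m) :
    0 < β k := by
  induction k, hk1 using Nat.le_induction with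
  | base => exact h1
  | succ k hk ih => exact (ih (by omega)).trans (hmono k hk (by omega))

theorem sum_mul_div_add_eq {ι : Type*} (s : Finset ι) (K r : ι → ℝ) {β : ℝ} (hβ : β ≠ 0)
    (hr : ∀ j ∈ s, β + r j ≠ 0) :
    ∑ j ∈ s, K j * β / (β + r j) =
      ∑ j ∈ s, K j * r j ^ 2 / (β * (β + r j)) + ∑ j ∈ s, K j - (∑ j ∈ s, K j * r j) / β := by
  rw [sum_div, ← sum_add_distrib, ← sum_sub_distrib]
  refine sum_congr rfl fun j hj => ?_
  have := hr j hj
  field_simp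
  ring

namespace Lagrange

open Polynomial

variable {F : Type*} [Field F] {ι : Type*} [DecidableEq ι] {s : Finset ι} {v : ι → F}

theorem sum_nodalWeight_mul_eval (hvs : Set.InjOn v s) {f : F[X]} (hf : f.degree < #s) :
    ∑ i ∈ s, nodalWeight s v i * f.eval (v i) = f.coeff (#s - 1) := by
  rw [coeff_eq_sum hvs hf]
  refine sum_congr rfl fun i _ => ?_
  rw [nodalWeight, prod_inv_distrib, div_eq_inv_mul]

theorem sum_nodalWeight_mul_eval_div_sub (hvs : Set.InjOn v s) {f : F[X]} (hf : f.degree < #s)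
    {x : F} (hx : ∀ i ∈ s, x ≠ v i) :
    ∑ i ∈ s, nodalWeight s v i * f.eval (v i) / (x - v i) = f.eval x / (nodal s v).eval x := by
  have h := congrArg (eval x) (eq_interpolate hvs hf)
  rw [eval_interpolate_not_at_node _ hx] at h
  rw [eq_div_iff (eval_nodal_not_at_node hx), h, mul_comm]
  exact congrArg _ (sum_congr rfl fun i _ => by ring)

theorem eval_derivative_nodal {x : F} (hx : ∀ i ∈ s, x ≠ v i) :
    (derivative (nodal s v)).eval x = (nodal s v).eval x * ∑ i ∈ s, (x - v i)⁻¹ := by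
  rw [derivative_nodal, eval_finsetSum, mul_sum]
  refine sum_congr rfl fun i hi => ?_
  rw [nodal_eq_mul_nodal_erase hi, eval_mul, eval_sub, eval_X, eval_C,
    mul_comm, ← mul_assoc, inv_mul_cancel₀ (sub_ne_zero.mpr (hx i hi)), one_mul]

theorem sum_nodalWeight_mul_eval_div_sub_sq (hvs : Set.InjOn v s) {f : F[X]}
    (hf : f.degree < #s) {x : F} (hx : ∀ i ∈ s, x ≠ v i) :
    ∑ i ∈ s, nodalWeight s v i * f.eval (v i) / (x - v i) ^ 2 =
      (f.eval x * ∑ i ∈ s, (x - v i)⁻¹ - (derivative f).eval x) / (nodal s v).eval x := by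
  set N := nodal s v
  have hN : N.eval x ≠ 0 := eval_nodal_not_at_node hx
  -- `q = (f - c N) / (X - x)` has `q (v i) = f (v i) / (v i - x)` and `q x = (f - c N)' x`.
  set p := f - C (f.eval x / N.eval x) * N
  have hpq : (X - C x) * (p /ₘ (X - C x)) = p := by
    rw [mul_divByMonic_eq_iff_isRoot]
    simp [p, IsRoot, hN]
  set q := p /ₘ (X - C x)
  have hq_deg : q.degree < #s := by
    have hp : p.degree ≤ #s := by
      refine (degree_sub_le _ _).trans (max_le hf.le ?_)
      rw [← smul_eq_C_mul]
      exact (degree_smul_le _ _).trans degree_nodal.le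
    by_cases hp0 : p = 0
    · simp [q, hp0]
    · exact (degree_divByMonic_lt _ _ hp0 (by simp)).trans_le hp
  have hq_node : ∀ i ∈ s, q.eval (v i) = f.eval (v i) / (v i - x) := by
    intro i hi
    have h := congrArg (eval (v i)) hpq
    simp only [p, eval_mul, eval_sub, eval_X, eval_C, N, eval_nodal_at_node hi, mul_zero,
      sub_zero] at h
    rw [← h, mul_div_cancel_left₀ _ (sub_ne_zero.mpr (hx i hi).symm)]
  have hq_x : q.eval x = (derivative f).eval x - f.eval x / N.eval x * (derivative N).eval x := by
    have h := congrArg (fun g => (derivative g).eval x) hpq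
    simp only [derivative_mul, derivative_sub, derivative_X, derivative_C, sub_zero, one_mul,
      eval_add, eval_mul, eval_sub, eval_X, eval_C, sub_self, zero_mul, add_zero, p,
      zero_add] at h
    rw [h]
  have h := sum_nodalWeight_mul_eval_div_sub hvs hq_deg hx
  rw [hq_x, eval_derivative_nodal hx] at h
  rw [eq_div_iff hN] at h ⊢
  have : ∑ i ∈ s, nodalWeight s v i * f.eval (v i) / (x - v i) ^ 2 =
      -∑ i ∈ s, nodalWeight s v i * q.eval (v i) / (x - v i) := by
    rw [← sum_neg_distrib]
    refine sum_congr rfl fun i hi => ?_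
    have := sub_ne_zero.mpr (hx i hi)
    have := sub_ne_zero.mpr (hx i hi).symm
    rw [hq_node i hi]
    field_simp
    ring
  rw [this, neg_mul, h]
  field_simp
  ring

end Lagrange

open Lagrange Polynomial

def Interlaces (m : ℕ) (β r : ℕ → ℝ) : Prop :=
  ∀ k, 1 ≤ k → k ≤ m → r (k - 1) < β k ∧ β k < r k

namespace Interlaces

variable {m : ℕ} {β r : ℕ → ℝ}

theorem strictMonoOn (h : Interlaces m β r) : StrictMonoOn r (Set.Iic m) :=
  strictMonoOn_Iic_of_lt_succ fun k hk => by
    have := h (k + 1) (by omega) (by omega)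
    simp only [Nat.add_sub_cancel] at this
    exact this.1.trans this.2

theorem lt_of_le (h : Interlaces m β r) {i j : ℕ} (hi : 1 ≤ i) (hij : i ≤ j) (hj : j ≤ m) :
    β i < r j :=
  (h i hi (hij.trans hj)).2.trans_le
    (h.strictMonoOn.monotoneOn (Set.mem_Iic.2 (hij.trans hj)) (Set.mem_Iic.2 hj) hij)

theorem lt_of_lt (h : Interlaces m β r) {i j : ℕ} (hji : j < i) (hi : i ≤ m) : r j < β i :=
  (h.strictMonoOn.monotoneOn (Set.mem_Iic.2 (by omega)) (Set.mem_Iic.2 (by omega))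
    (by omega : j ≤ i - 1)).trans_lt (h i (by omega) hi).1

theorem pos (h : Interlaces m β r) (hr0 : 0 < r 0) {j : ℕ} (hj : j ≤ m) : 0 < r j :=
  hr0.trans_le (h.strictMonoOn.monotoneOn (Set.mem_Iic.2 (Nat.zero_le _)) (Set.mem_Iic.2 hj)
    (Nat.zero_le j))

theorem pos_of_mem_range (h : Interlaces m β r) (hr0 : 0 < r 0) {j : ℕ}
    (hj : j ∈ range (m + 1)) : 0 < r j :=
  h.pos hr0 (Nat.lt_succ_iff.1 (mem_range.1 hj))

theorem pos_of_mem_Icc (h : Interlaces m β r) (hr0 : 0 < r 0) {i : ℕ}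
    (hi : i ∈ Icc 1 m) : 0 < β i := by
  rw [mem_Icc] at hi
  exact (h.pos hr0 (by omega : i - 1 ≤ m)).trans (h i hi.1 hi.2).1

theorem injOn (h : Interlaces m β r) : Set.InjOn r (range (m + 1)) :=
  h.strictMonoOn.injOn.mono fun j hj => by simpa [Nat.lt_succ_iff] using hj

theorem node_sub_ne_zero (h : Interlaces m β r) {i j : ℕ} (hi : i ∈ Icc 1 m) (hj : j ≤ m) :
    r j - β i ≠ 0 := by
  rw [mem_Icc] at hi
  rcases le_or_gt i j with hij | hji
  · exact (sub_pos.2 (h.lt_of_le hi.1 hij hj)).ne'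
  · exact (sub_neg.2 (h.lt_of_lt hji hi.2)).ne

end Interlaces

noncomputable def firstColInv (m : ℕ) (β r : ℕ → ℝ) (j : ℕ) : ℝ :=
  (nodal (Icc 1 m) β).eval (r j) * nodalWeight (range (m + 1)) r j

theorem eval_zero_nodal_div_eval_zero_nodal (m : ℕ) (β r : ℕ → ℝ) :
    (nodal (Icc 1 m) β).eval 0 / (nodal (range (m + 1)) r).eval 0 =
      -((∏ i ∈ Icc 1 m, β i) / ∏ j ∈ range (m + 1), r j) := by
  simp only [eval_nodal, zero_sub, prod_neg, Nat.card_Icc, card_range, Nat.add_sub_cancel,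
    pow_succ, mul_assoc, 
    mul_div_mul_left _ _ (pow_ne_zero m (neg_ne_zero.2 (one_ne_zero (α := ℝ))))]
  ring

section FirstColInv

variable {m : ℕ} {β r : ℕ → ℝ}

theorem degree_nodal_lt_card_range {t : Finset ℕ} (ht : t ⊆ Icc 1 m) :
    (nodal t β).degree < #(range (m + 1)) := by
  rw [degree_nodal (v := β), card_range, Nat.cast_lt]
  have := card_le_card ht
  simp only [Nat.card_Icc] at this
  omega

theorem sum_firstColInv (h : Interlaces m β r) : ∑ j ∈ range (m + 1), firstColInv m β r j = 1 := by
  simp_rw [firstColInv, mul_comm _ (nodalWeight _ _ _)]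
  have hdeg : (nodal (Icc 1 m) β).natDegree = m := by
    rw [natDegree_nodal, Nat.card_Icc, Nat.add_sub_cancel]
  rw [sum_nodalWeight_mul_eval h.injOn (degree_nodal_lt_card_range subset_rfl), card_range,
    Nat.add_sub_cancel]
  simpa only [hdeg] using (nodal_monic (s := Icc 1 m) (v := β)).coeff_natDegree

theorem sum_div_sub_mul_firstColInv (h : Interlaces m β r) {i : ℕ} (hi : i ∈ Icc 1 m) :
    ∑ j ∈ range (m + 1), β i / (β i - r j) * firstColInv m β r j = 0 := by
  have hterm : ∀ j ∈ range (m + 1), β i / (β i - r j) * firstColInv m β r j =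
      -β i * (nodalWeight (range (m + 1)) r j * (nodal ((Icc 1 m).erase i) β).eval (r j)) := by
    intro j hj
    have hne := h.node_sub_ne_zero hi (Nat.lt_succ_iff.1 (mem_range.1 hj))
    have hne' : β i - r j ≠ 0 := by rw [← neg_sub]; exact neg_ne_zero.2 hne
    rw [firstColInv, nodal_eq_mul_nodal_erase hi, eval_mul, eval_sub, eval_X, eval_C]
    field_simp
    ring
  rw [sum_congr rfl hterm, ← mul_sum, sum_nodalWeight_mul_eval h.injOn
    (degree_nodal_lt_card_range (erase_subset _ _)), card_range, Nat.add_sub_cancel,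
    coeff_eq_zero_of_natDegree_lt, mul_zero]
  rw [natDegree_nodal, card_erase_of_mem hi, Nat.card_Icc]
  rw [mem_Icc] at hi
  omega

theorem mulVec_firstColInv (h : Interlaces m β r) {A : Matrix (Fin (m + 1)) (Fin (m + 1)) ℝ}
    (hA : ∀ i j : Fin (m + 1), A i j = if (i : ℕ) = 0 then 1 else β i / (β i - r j)) :
    A *ᵥ (fun j : Fin (m + 1) => firstColInv m β r j) = Pi.single 0 1 := by
  funext i
  rw [mulVec, dotProduct]
  simp_rw [hA]
  induction i using Fin.cases with
  | zero =>
    simp only [Fin.val_zero, if_true, one_mul, Pi.single_eq_same]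
    rw [Fin.sum_univ_eq_sum_range (firstColInv m β r), sum_firstColInv h]
  | succ i =>
    simp only [Fin.val_succ, Nat.succ_ne_zero, if_false, Pi.single_apply, Fin.succ_ne_zero]
    rw [Fin.sum_univ_eq_sum_range (fun j => β (i + 1) / (β (i + 1) - r j) * firstColInv m β r j)]
    exact sum_div_sub_mul_firstColInv h (mem_Icc.2 ⟨by omega, by omega⟩)

theorem Interlaces.firstColInv_pos (h : Interlaces m β r) {j : ℕ} (hj : j ≤ m) :
    0 < firstColInv m β r j := by
  have hβsplit : ∏ i ∈ Icc 1 m, (r j - β i) =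
      (∏ i ∈ Ioc 0 j, (r j - β i)) * ∏ i ∈ Ioc j m, (r j - β i) :=
    (prod_Ioc_consecutive _ (Nat.zero_le j) hj).symm
  have hrsplit : (range (m + 1)).erase j = range j ∪ Ioc j m := by
    ext l
    simp only [mem_erase, mem_range, mem_union, mem_Ioc]
    omega
  have hdisj : Disjoint (range j) (Ioc j m) := by
    rw [disjoint_left]
    intro l hl hl'
    simp only [mem_range, mem_Ioc] at hl hl'
    omega
  have hsplit : firstColInv m β r j = (∏ i ∈ Ioc 0 j, (r j - β i)) *
      (∏ l ∈ range j, (r j - r l)⁻¹) * ∏ i ∈ Ioc j m, ((r j - β i) * (r j - r i)⁻¹) := by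
    rw [firstColInv, eval_nodal, nodalWeight, hβsplit, hrsplit, prod_union hdisj,
      prod_mul_distrib]
    ring
  have hmono := h.strictMonoOn
  rw [hsplit]
  refine mul_pos (mul_pos (prod_pos fun i hi => ?_) (prod_pos fun l hl => ?_))
    (prod_pos fun i hi => ?_)
  · rw [mem_Ioc] at hi
    exact sub_pos.2 (h.lt_of_le hi.1 hi.2 hj)
  · rw [mem_range] at hl
    exact inv_pos.2 (sub_pos.2 (hmono (Set.mem_Iic.2 (by omega)) (Set.mem_Iic.2 hj) hl))
  · rw [mem_Ioc] at hi
    exact mul_pos_of_neg_of_neg (sub_neg.2 (h.lt_of_lt hi.1 hi.2)) (inv_lt_zero.2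
      (sub_neg.2 (hmono (Set.mem_Iic.2 hj) (Set.mem_Iic.2 hi.2) hi.1)))

theorem sum_firstColInv_div (h : Interlaces m β r) (hr0 : 0 < r 0) :
    ∑ j ∈ range (m + 1), firstColInv m β r j / r j =
      (∏ i ∈ Icc 1 m, β i) / ∏ j ∈ range (m + 1), r j := by
  have hsum := sum_nodalWeight_mul_eval_div_sub h.injOn
    (degree_nodal_lt_card_range (β := β) subset_rfl) fun _ hj => (h.pos_of_mem_range hr0 hj).ne
  rw [eval_zero_nodal_div_eval_zero_nodal, ← neg_eq_iff_eq_neg, ← sum_neg_distrib] at hsum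
  rw [← hsum]
  refine sum_congr rfl fun j _ => ?_
  rw [firstColInv, zero_sub, div_neg, neg_neg, mul_comm (eval _ _)]

theorem sum_firstColInv_div_sq (h : Interlaces m β r) (hr0 : 0 < r 0) :
    ∑ j ∈ range (m + 1), firstColInv m β r j / r j ^ 2 =
      (∏ i ∈ Icc 1 m, β i) / (∏ j ∈ range (m + 1), r j) *
        (∑ j ∈ range (m + 1), (r j)⁻¹ - ∑ i ∈ Icc 1 m, (β i)⁻¹) := by
  have hsum := sum_nodalWeight_mul_eval_div_sub_sq h.injOn
    (degree_nodal_lt_card_range (β := β) subset_rfl) fun _ hj => (h.pos_of_mem_range hr0 hj).ne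
  rw [eval_derivative_nodal fun _ hi => (h.pos_of_mem_Icc hr0 hi).ne, ← mul_sub,
    mul_div_right_comm, eval_zero_nodal_div_eval_zero_nodal] at hsum
  simp only [zero_sub, inv_neg, sum_neg_distrib, neg_sq] at hsum
  rw [← neg_sub', neg_mul_neg] at hsum
  rw [← hsum]
  refine sum_congr rfl fun j _ => ?_
  rw [firstColInv, mul_comm (eval _ _)]

end FirstColInv

theorem stmt10_general (c : ℝ)
    (mp mn : ℕ)
    (βp βn : ℕ → ℝ)
    (hβn1 : 0 < βn 1)
    (hβnmono : ∀ k, 1 ≤ k → k < mn → βn k < βn (k + 1))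
    (r : ℕ → ℝ)
    (hr0 : 0 < r 0)
    (hinter : ∀ k, 1 ≤ k → k ≤ mp → r (k - 1) < βp k ∧ βp k < r k)
    (A : Matrix (Fin (mp + 1)) (Fin (mp + 1)) ℝ)
    (hA : ∀ i j : Fin (mp + 1), A i j = if (i : ℕ) = 0 then 1 else βp i / (βp i - r j))
    (hdet : A.det ≠ 0)
    (R : ℝ)
    (hR : R = (∏ k ∈ Finset.range (mp + 1), r k) / ∏ k ∈ Finset.Icc 1 mp, βp k)
    (K : ℕ → ℝ)
    (hK : ∀ j : Fin (mp + 1), K j = R * cof A 0 j / ((r j) ^ 2 * A.det))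
    (b : ℝ)
    (hb : b = c + (∑ i ∈ Finset.range (mp + 1), 1 / r i) - ∑ i ∈ Finset.Icc 1 mp, 1 / βp i)
    :
    ∀ k, 1 ≤ k → k ≤ mn →
      ((∑ j ∈ Finset.range (mp + 1), K j * βn k / (βn k + r j)) - (b - c) + 1 / βn k
          = ∑ j ∈ Finset.range (mp + 1), K j * (r j) ^ 2 / (βn k * (βn k + r j))) ∧
      (0 < (∑ j ∈ Finset.range (mp + 1), K j * βn k / (βn k + r j)) - (b - c) + 1 / βn k) := by
  intro k hk1 hk2
  have hI : Interlaces mp βp r := hinter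
  have hrpos : ∀ j ∈ range (mp + 1), 0 < r j := fun _ hj => hI.pos_of_mem_range hr0 hj
  have hRpos : 0 < R := by
    rw [hR]
    exact div_pos (prod_pos hrpos) (prod_pos fun _ hi => hI.pos_of_mem_Icc hr0 hi)
  have hβpos : 0 < βn k := pos_of_pos_of_lt_succ hβn1 hβnmono hk1 hk2
  have hKw : ∀ j ∈ range (mp + 1), K j = R * firstColInv mp βp r j / r j ^ 2 := by
    intro j hj
    rw [hK ⟨j, mem_range.1 hj⟩, eq_cof_div_det_of_mulVec_eq_single hdet
      (mulVec_firstColInv hI hA) ⟨j, mem_range.1 hj⟩]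
    field_simp
  have hKpos : ∀ j ∈ range (mp + 1), 0 < K j := fun j hj => by
    rw [hKw j hj]
    exact div_pos (mul_pos hRpos (hI.firstColInv_pos (Nat.lt_succ_iff.1 (mem_range.1 hj))))
      (pow_pos (hrpos j hj) 2)
  have hKr : ∑ j ∈ range (mp + 1), K j * r j = 1 := by
    have hterm : ∀ j ∈ range (mp + 1), K j * r j = R * (firstColInv mp βp r j / r j) :=
      fun j hj => by rw [hKw j hj]; field_simp
    rw [sum_congr rfl hterm, ← mul_sum,
      sum_firstColInv_div hI hr0, ← inv_div, ← hR, mul_inv_cancel₀ hRpos.ne']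
  have hKsum : ∑ j ∈ range (mp + 1), K j = b - c := by
    rw [sum_congr rfl fun j hj => by rw [hKw j hj, mul_div_assoc], ← mul_sum,
      sum_firstColInv_div_sq hI hr0, ← inv_div, ← hR, ← mul_assoc, mul_inv_cancel₀ hRpos.ne', hb]
    simp only [one_div]
    ring
  rw [sum_mul_div_add_eq _ _ _ hβpos.ne' fun j hj => (add_pos hβpos (hrpos j hj)).ne', hKr,
    hKsum]
  refine ⟨by ring, ?_⟩
  have hpos : 0 < ∑ j ∈ range (mp + 1), K j * r j ^ 2 / (βn k * (βn k + r j)) :=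
    sum_pos (fun j hj => by have := hKpos j hj; have := hrpos j hj; positivity)
      nonempty_range_add_one
  linarith

theorem stmt10 (σ μ ρ lamn lamp c : ℝ)
    (hσ : 0 < σ) (hρ : 0 < ρ) (hlamn : 0 < lamn) (hlamp : 0 < lamp) (hc : 0 < c)
    (mp mn : ℕ) (hmp : 1 ≤ mp) (hmn : 1 ≤ mn)
    (ωp βp ωn βn : ℕ → ℝ)
    (hωp : ∀ k, 1 ≤ k → k ≤ mp → 0 < ωp k)
    (hωpsum : ∑ k ∈ Finset.Icc 1 mp, ωp k = 1)
    (hβp1 : 0 < βp 1)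
    (hβpmono : ∀ k, 1 ≤ k → k < mp → βp k < βp (k + 1))
    (hωn : ∀ k, 1 ≤ k → k ≤ mn → 0 < ωn k)
    (hωnsum : ∑ k ∈ Finset.Icc 1 mn, ωn k = 1)
    (hβn1 : 0 < βn 1)
    (hβnmono : ∀ k, 1 ≤ k → k < mn → βn k < βn (k + 1))
    (r : ℕ → ℝ)
    (hroot : ∀ j, j ≤ mp →
      σ ^ 2 * (r j) ^ 2 / 2 + μ * r j - (ρ + lamn + lamp)
        + lamp * ∑ i ∈ Finset.Icc 1 mp, ωp i * βp i / (βp i - r j)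
        + lamn * ∑ i ∈ Finset.Icc 1 mn, ωn i * βn i / (r j + βn i) = 0)
    (hr0 : 0 < r 0)
    (hinter : ∀ k, 1 ≤ k → k ≤ mp → r (k - 1) < βp k ∧ βp k < r k)
    (A : Matrix (Fin (mp + 1)) (Fin (mp + 1)) ℝ)
    (hA : ∀ i j : Fin (mp + 1), A i j = if (i : ℕ) = 0 then 1 else βp i / (βp i - r j))
    (hdet : A.det ≠ 0)
    (R : ℝ)
    (hR : R = (∏ k ∈ Finset.range (mp + 1), r k) / ∏ k ∈ Finset.Icc 1 mp, βp k)
    (K : ℕ → ℝ)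
    (hK : ∀ j : Fin (mp + 1), K j = R * cof A 0 j / ((r j) ^ 2 * A.det))
    (b : ℝ)
    (hb : b = c + (∑ i ∈ Finset.range (mp + 1), 1 / r i) - ∑ i ∈ Finset.Icc 1 mp, 1 / βp i)
    :
    ∀ k, 1 ≤ k → k ≤ mn →
      ((∑ j ∈ Finset.range (mp + 1), K j * βn k / (βn k + r j)) - (b - c) + 1 / βn k
          = ∑ j ∈ Finset.range (mp + 1), K j * (r j) ^ 2 / (βn k * (βn k + r j))) ∧
      (0 < (∑ j ∈ Finset.range (mp + 1), K j * βn k / (βn k + r j)) - (b - c) + 1 / βn k) :=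
  stmt10_general c mp mn βp βn hβn1 hβnmono r hr0 hinter A hA hdet R hR K hK b hb
end
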